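/- Let H be a complex Hilbert space, Ω ∈ H a unit vector, and A, B bounded linear operators on H satisfying the boolean factorization identities ⟨Ω, B*A*A B Ω⟩ = ⟨Ω, B*Ω⟩·⟨Ω, A*A Ω⟩·⟨Ω, B Ω⟩, ⟨Ω, B*A*A Ω⟩ = ⟨Ω, B*Ω⟩·⟨Ω, A*A Ω⟩, and ⟨Ω, A*A B Ω⟩ = ⟨Ω, A*A Ω⟩·⟨Ω, B Ω⟩. Then A B Ω = ⟨Ω, B Ω⟩ · A Ω. (These hypotheses hold whenever A = f(X) and B = g(Y) for boolean independent normal operators X, Y and bounded continuous functions f, g vanishing at 0; the conclusion is the key vector identity f(X)g(Y)Ω = (∫ g dν)·f(X)Ω used to identify the range of the boolean model isometry.) -/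

import Mathlib

open ContinuousLinearMap

open scoped ComplexConjugate InnerProductSpace

/-- Expanding `‖u - c • v‖²` with the two identities (and the conjugate of the second) gives `0`. -/
theorem eq_smul_of_inner_self_eq_of_inner_eq {𝕜 E : Type*} [RCLike 𝕜] [NormedAddCommGroup E]
    [InnerProductSpace 𝕜 E] {u v : E} {c : 𝕜}
    (huu : ⟪u, u⟫_𝕜 = conj c * ⟪v, v⟫_𝕜 * c) (hvu : ⟪v, u⟫_𝕜 = ⟪v, v⟫_𝕜 * c) :
    u = c • v := by
  have huv : ⟪u, v⟫_𝕜 = conj c * ⟪v, v⟫_𝕜 := by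
    rw [← inner_conj_symm, hvu, map_mul, inner_self_conj, mul_comm]
  rw [← sub_eq_zero, ← inner_self_eq_zero (𝕜 := 𝕜)]
  simp only [inner_sub_left, inner_sub_right, inner_smul_left, inner_smul_right, huu, hvu, huv]
  ring

theorem boolean_vector_identity
    {H : Type*} [NormedAddCommGroup H] [InnerProductSpace ℂ H] [CompleteSpace H]
    (Ω : H) (A B : H →L[ℂ] H)
    (h1 : (inner ℂ Ω ((adjoint B) ((adjoint A) (A (B Ω)))) : ℂ)
        = (inner ℂ Ω ((adjoint B) Ω) : ℂ) * (inner ℂ Ω ((adjoint A) (A Ω)) : ℂ)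
            * (inner ℂ Ω (B Ω) : ℂ))
    (h3 : (inner ℂ Ω ((adjoint A) (A (B Ω))) : ℂ)
        = (inner ℂ Ω ((adjoint A) (A Ω)) : ℂ) * (inner ℂ Ω (B Ω) : ℂ)) :
    A (B Ω) = (inner ℂ Ω (B Ω) : ℂ) • A Ω := by
  simp only [adjoint_inner_right] at h1 h3
  rw [← inner_conj_symm (B Ω) Ω] at h1
  exact eq_smul_of_inner_self_eq_of_inner_eq h1 h3
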